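/- Let D be a finite digraph of order n with maximum out-degree Δ⁺(D) = Δ⁺ and minimum in-degree δ⁻(D) ≥ 1, and suppose (Δ⁺ + 1) · γ×₂(D) = 2n. Then for every minimum double dominating set S of D: every vertex of S has exactly one in-neighbor in S, every vertex of S has out-degree exactly Δ⁺ in D, and every vertex of V(D) ∖ S has exactly two in-neighbors in S. -/

import Mathlib

/-!
Count the pairs `(u, v)` with `u ∈ S` dominating `v`. Double domination gives at least `2n`
of them, and each `u ∈ S` dominates at most `|N⁺[u]| ≤ Δ⁺ + 1` vertices, so
`2n ≤ (Δ⁺ + 1)|S|`. Equality forces both bounds to be tight for every vertex: each `v` is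
dominated exactly twice, and each `u ∈ S` has `|N⁺[u]| = Δ⁺ + 1`, hence out-degree `Δ⁺` and
no loop. Reading off the in-neighbours in `S` from the two dominators of `v` gives the rest.
-/

open Finset

variable {V : Type*}

/-- The out-degree of `v` in the digraph with arc relation `A`. -/
def outDeg [Fintype V] (A : V → V → Prop) [DecidableRel A] (v : V) : ℕ :=
  (Finset.univ.filter fun u => A v u).card

/-- The in-degree of `v` in the digraph with arc relation `A`. -/
def inDeg [Fintype V] (A : V → V → Prop) [DecidableRel A] (v : V) : ℕ :=
  (Finset.univ.filter fun u => A u v).card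

/-- The minimum in-degree `δ⁻` of the digraph. -/
noncomputable def minInDeg [Fintype V] (A : V → V → Prop) [DecidableRel A] : ℕ :=
  sInf (Set.range fun v => inDeg A v)

/-- The maximum out-degree `Δ⁺` of the digraph. -/
noncomputable def maxOutDeg [Fintype V] (A : V → V → Prop) [DecidableRel A] : ℕ :=
  sSup (Set.range fun v => outDeg A v)

/-- The converse digraph `D⁻¹`, obtained by reversing every arc. -/
def converse (A : V → V → Prop) : V → V → Prop := fun u v => A v u

instance converseDecidable (A : V → V → Prop) [h : DecidableRel A] :
    DecidableRel (converse A) := fun u v => h v u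

/-- `B` is a `k`-limited packing: `|N⁺[v] ∩ B| ≤ k` for every vertex `v`. -/
def IsLimitedPacking [DecidableEq V] (A : V → V → Prop) [DecidableRel A] (k : ℕ)
    (B : Finset V) : Prop :=
  ∀ v : V, (B.filter fun u => u = v ∨ A v u).card ≤ k

/-- The `k`-limited packing number `L_k(D)` (`k = 1` gives the packing number `ρ(D)`). -/
noncomputable def limitedPackingNumber [Fintype V] [DecidableEq V] (A : V → V → Prop) [DecidableRel A]
    (k : ℕ) : ℕ :=
  sSup {m | ∃ B : Finset V, IsLimitedPacking A k B ∧ B.card = m}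

/-- `S` is an `r`-tuple dominating set: every vertex is dominated by at least `r`
vertices of `S` (where `u` dominates `v` if `u = v` or `(u,v)` is an arc). -/
def IsTupleDominating [DecidableEq V] (A : V → V → Prop) [DecidableRel A] (r : ℕ)
    (S : Finset V) : Prop :=
  ∀ v : V, r ≤ (S.filter fun u => u = v ∨ A u v).card

/-- The `r`-tuple domination number `γ×r(D)` (`r = 1` gives the domination number `γ(D)`,
`r = 2` the double domination number `γ×₂(D)`). -/
noncomputable def tupleDominationNumber [Fintype V] [DecidableEq V] (A : V → V → Prop) [DecidableRel A]
    (r : ℕ) : ℕ :=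
  sInf {m | ∃ S : Finset V, IsTupleDominating A r S ∧ S.card = m}

/-- `S` is a total 2-dominating set: the subdigraph induced by `S` has no isolated
vertices, and every vertex outside `S` has at least two in-neighbors in `S`. -/
def IsTotal2Dominating [DecidableEq V] (A : V → V → Prop) [DecidableRel A]
    (S : Finset V) : Prop :=
  (∀ v ∈ S, ∃ u ∈ S, u ≠ v ∧ (A u v ∨ A v u)) ∧
    ∀ v : V, v ∉ S → 2 ≤ (S.filter fun u => A u v).card

/-- The total 2-domination number `γ×₂ᵗ(D)`. -/
noncomputable def total2DominationNumber [Fintype V] [DecidableEq V] (A : V → V → Prop)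
    [DecidableRel A] : ℕ :=
  sInf {m | ∃ S : Finset V, IsTotal2Dominating A S ∧ S.card = m}

/-- `B` is a total 2-limited packing: every vertex of `B` is adjacent with at most one
vertex of `B`, and every vertex outside `B` has at most two out-neighbors in `B`. -/
def IsTotal2LimitedPacking [DecidableEq V] (A : V → V → Prop) [DecidableRel A]
    (B : Finset V) : Prop :=
  (∀ v ∈ B, (B.filter fun u => u ≠ v ∧ (A u v ∨ A v u)).card ≤ 1) ∧
    ∀ v : V, v ∉ B → (B.filter fun u => A v u).card ≤ 2

/-- The total 2-limited packing number `L₂ᵗ(D)`. -/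
noncomputable def total2LimitedPackingNumber [Fintype V] [DecidableEq V] (A : V → V → Prop)
    [DecidableRel A] : ℕ :=
  sSup {m | ∃ B : Finset V, IsTotal2LimitedPacking A B ∧ B.card = m}

/-- An end-vertex: a vertex `v` with `deg⁺(v) + deg⁻(v) = 1`. -/
def IsEndVertex [Fintype V] (A : V → V → Prop) [DecidableRel A] (v : V) : Prop :=
  outDeg A v + inDeg A v = 1

/-- A penultimate vertex: a vertex adjacent with an end-vertex. -/
def IsPenultimate [Fintype V] (A : V → V → Prop) [DecidableRel A] (v : V) : Prop :=
  ∃ u : V, IsEndVertex A u ∧ (A u v ∨ A v u)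

lemma outDeg_le_maxOutDeg [Fintype V] (A : V → V → Prop) [DecidableRel A] (u : V) :
    outDeg A u ≤ maxOutDeg A :=
  le_csSup (Set.finite_range _).bddAbove ⟨u, rfl⟩

section Dominators

variable [DecidableEq V] (A : V → V → Prop) [DecidableRel A] {S : Finset V} {v : V}

lemma card_filter_dominates_of_mem (hv : v ∈ S) (hloop : ¬ A v v) :
    (S.filter fun u => u = v ∨ A u v).card = (S.filter fun u => A u v).card + 1 := by
  have hsplit : (S.filter fun u => u = v ∨ A u v) = insert v (S.filter fun u => A u v) := by
    ext u
    by_cases huv : u = v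
    · subst huv; simp [hv]
    · simp [huv]
  rw [hsplit, card_insert_of_notMem (by simp [hloop])]

lemma filter_dominates_eq_of_notMem (hv : v ∉ S) :
    (S.filter fun u => u = v ∨ A u v) = S.filter fun u => A u v :=
  filter_congr fun u hu => by simp [show u ≠ v from fun h => hv (h ▸ hu)]

end Dominators

section ClosedOutNbhd

variable [Fintype V] [DecidableEq V] (A : V → V → Prop) [DecidableRel A]

def closedOutNbhd (u : V) : Finset V :=
  univ.filter fun v => u = v ∨ A u v

lemma closedOutNbhd_eq_insert (u : V) :
    closedOutNbhd A u = insert u (univ.filter fun v => A u v) := by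
  ext v
  simp [closedOutNbhd, eq_comm]

lemma card_closedOutNbhd_le_outDeg_add_one (u : V) :
    (closedOutNbhd A u).card ≤ outDeg A u + 1 := by
  rw [closedOutNbhd_eq_insert]
  exact card_insert_le _ _

lemma card_closedOutNbhd_le_maxOutDeg_add_one (u : V) :
    (closedOutNbhd A u).card ≤ maxOutDeg A + 1 :=
  (card_closedOutNbhd_le_outDeg_add_one A u).trans (by simpa using outDeg_le_maxOutDeg A u)

lemma not_arc_self_and_outDeg_eq_of_card_closedOutNbhd_eq {u : V}
    (h : (closedOutNbhd A u).card = maxOutDeg A + 1) :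
    ¬ A u u ∧ outDeg A u = maxOutDeg A := by
  have hle := outDeg_le_maxOutDeg A u
  refine ⟨fun hloop => ?_, by have := card_closedOutNbhd_le_outDeg_add_one A u; omega⟩
  rw [closedOutNbhd_eq_insert, card_insert_of_mem (by simpa using hloop)] at h
  change outDeg A u = _ at h
  omega

lemma sum_card_filter_dominates_eq_sum_card_closedOutNbhd (S : Finset V) :
    ∑ v, (S.filter fun u => u = v ∨ A u v).card = ∑ u ∈ S, (closedOutNbhd A u).card :=
  (sum_card_bipartiteAbove_eq_sum_card_bipartiteBelow (fun u v => u = v ∨ A u v)).symm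

/-- Equality in the bound `r n ≤ (Δ⁺ + 1) |S|` for an `r`-tuple dominating set `S`. -/
lemma card_filter_dominates_eq_and_card_closedOutNbhd_eq {r : ℕ} {S : Finset V}
    (hS : IsTupleDominating A r S)
    (heq : (maxOutDeg A + 1) * S.card = r * Fintype.card V) :
    (∀ v, (S.filter fun u => u = v ∨ A u v).card = r) ∧
      ∀ u ∈ S, (closedOutNbhd A u).card = maxOutDeg A + 1 := by
  have hlower : ∑ _v : V, r ≤ ∑ v, (S.filter fun u => u = v ∨ A u v).card :=
    sum_le_sum fun v _ => hS v
  have hupper : ∑ u ∈ S, (closedOutNbhd A u).card ≤ ∑ _u ∈ S, (maxOutDeg A + 1) :=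
    sum_le_sum fun u _ => card_closedOutNbhd_le_maxOutDeg_add_one A u
  rw [sum_card_filter_dominates_eq_sum_card_closedOutNbhd] at hlower
  simp only [sum_const, card_univ, smul_eq_mul] at hlower hupper
  constructor
  · intro v
    refine ((sum_eq_sum_iff_of_le fun v (_ : v ∈ univ) => hS v).mp ?_ v (mem_univ v)).symm
    rw [sum_card_filter_dominates_eq_sum_card_closedOutNbhd, sum_const, card_univ, smul_eq_mul]
    linarith
  · refine (sum_eq_sum_iff_of_le fun u (_ : u ∈ S) =>
      card_closedOutNbhd_le_maxOutDeg_add_one A u).mp ?_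
    rw [sum_const, smul_eq_mul]
    linarith

end ClosedOutNbhd

theorem stmt6_general {V : Type*} [Fintype V] [DecidableEq V] (A : V → V → Prop) [DecidableRel A]
    (n : ℕ) (hn : Fintype.card V = n)
    (heq : (maxOutDeg A + 1) * tupleDominationNumber A 2 = 2 * n) :
    ∀ S : Finset V, IsTupleDominating A 2 S → S.card = tupleDominationNumber A 2 →
      (∀ v ∈ S, (S.filter fun u => A u v).card = 1 ∧ outDeg A v = maxOutDeg A) ∧
      (∀ v ∉ S, (S.filter fun u => A u v).card = 2) := by
  intro S hS hScard
  obtain ⟨hdom, hnbhd⟩ :=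
    card_filter_dominates_eq_and_card_closedOutNbhd_eq A hS (by rw [hScard, heq, hn])
  refine ⟨fun v hv => ?_, fun v hv => ?_⟩
  · obtain ⟨hloop, hdeg⟩ := not_arc_self_and_outDeg_eq_of_card_closedOutNbhd_eq A (hnbhd v hv)
    have hsplit := card_filter_dominates_of_mem A hv hloop
    exact ⟨by rw [hdom v] at hsplit; omega, hdeg⟩
  · rw [← filter_dominates_eq_of_notMem A hv]
    exact hdom v

/-- If `δ⁻(D) ≥ 1` and `(Δ⁺ + 1) · γ×₂(D) = 2n`, then every minimum double
dominating set `S` satisfies: each `v ∈ S` has exactly one in-neighbor in `S` and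
out-degree exactly `Δ⁺`, and each `v ∉ S` has exactly two in-neighbors in `S`. -/
theorem stmt6 {V : Type*} [Fintype V] [DecidableEq V] (A : V → V → Prop) [DecidableRel A]
    (hloopless : ∀ v : V, ¬ A v v) (n : ℕ) (hn : Fintype.card V = n)
    (hδ : 1 ≤ minInDeg A)
    (heq : (maxOutDeg A + 1) * tupleDominationNumber A 2 = 2 * n) :
    ∀ S : Finset V, IsTupleDominating A 2 S → S.card = tupleDominationNumber A 2 →
      (∀ v ∈ S, (S.filter fun u => A u v).card = 1 ∧ outDeg A v = maxOutDeg A) ∧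
      (∀ v ∉ S, (S.filter fun u => A u v).card = 2) :=
  stmt6_general A n hn heq
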